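/- arXiv:1611.07907 — 6 statements merged into one kernel-verified Lean document; each statement's English description precedes it below -/
import Mathlib

section
/- If θ' = (k'_r) is a lacunary refinement of the lacunary sequence θ = (k_r) (i.e., {k_r} ⊆ {k'_r}) and (x_m) ∈ AC_{θ'} in the strong sense that the averages over the refined blocks are uniformly small eventually, then (x_m) ∈ AC_θ. -/
open Filter Finset

/-- Membership in the lacunary arithmetic convergence space `AC_θ`,
with lacunary sequence given by `k` (blocks `I_r = (k r, k (r+1)]`,
`h_r = k (r+1) - k r`) and witness integer `n`. -/
def ACtheta (k : ℕ → ℕ) (n : ℕ) (x : ℕ → ℝ) : Prop :=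
  Tendsto (fun r => (1 / ((k (r + 1) - k r : ℕ) : ℝ)) *
    ∑ m ∈ Finset.Ioc (k r) (k (r + 1)), |x m - x (Nat.gcd m n)|) atTop (nhds 0)

/-- Membership in the strongly Cesàro arithmetic convergence space `AC_{σ₁}`
with witness integer `n`. -/
def ACsigma (n : ℕ) (x : ℕ → ℝ) : Prop :=
  Tendsto (fun t : ℕ => (1 / (t : ℝ)) *
    ∑ m ∈ Finset.Icc 1 t, |x m - x (Nat.gcd m n)|) atTop (nhds 0)

open Topology

/-! Every block `(k r, k (r + 1)]` of `θ` is a union of consecutive blocks of the refinement `θ'`,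
all of which eventually lie far out, so the average of `|x m - x ⟨m, n⟩|` over it is a weighted
mean of averages over blocks of `θ'` that are all eventually below any given `ε`. -/

theorem StrictMono.exists_strictMono_comp_eq_of_range_subset {α β γ : Type*} [Preorder α]
    [Preorder β] [LinearOrder γ] {k : α → β} {k' : γ → β} (hk : StrictMono k)
    (hk' : StrictMono k') (h : Set.range k ⊆ Set.range k') :
    ∃ f : α → γ, StrictMono f ∧ k' ∘ f = k := by
  choose f hf using fun a => h ⟨a, rfl⟩
  refine ⟨f, fun a b hab => hk'.lt_iff_lt.1 ?_, funext hf⟩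
  simpa only [hf] using hk hab

theorem sum_Ioc_le_of_forall_block_le {g : ℕ → ℝ} {k : ℕ → ℕ} (hk : Monotone k) {ε : ℝ}
    {a b : ℕ} (hab : a ≤ b)
    (h : ∀ i ∈ Ico a b, ∑ m ∈ Ioc (k i) (k (i + 1)), g m ≤ ε * ((k (i + 1) : ℝ) - k i)) :
    ∑ m ∈ Ioc (k a) (k b), g m ≤ ε * ((k b : ℝ) - k a) := by
  induction b, hab using Nat.le_induction with
  | base => simp
  | succ b hab ih =>
    rw [← sum_Ioc_consecutive _ (hk hab) (hk b.le_succ)]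
    have hlast := h b (mem_Ico.2 ⟨hab, b.lt_succ_self⟩)
    have hinit := ih fun i hi => h i (Ico_subset_Ico_right b.le_succ hi)
    linarith

noncomputable def blockAverage (k : ℕ → ℕ) (g : ℕ → ℝ) (r : ℕ) : ℝ :=
  (1 / ((k (r + 1) - k r : ℕ) : ℝ)) * ∑ m ∈ Ioc (k r) (k (r + 1)), g m

theorem blockAverage_nonneg {g : ℕ → ℝ} (hg : ∀ m, 0 ≤ g m) (k : ℕ → ℕ) (r : ℕ) :
    0 ≤ blockAverage k g r :=
  mul_nonneg (by positivity) (sum_nonneg fun m _ => hg m)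

theorem blockAverage_le_iff {k : ℕ → ℕ} {r : ℕ} (hr : k r < k (r + 1)) (g : ℕ → ℝ) (ε : ℝ) :
    blockAverage k g r ≤ ε ↔
      ∑ m ∈ Ioc (k r) (k (r + 1)), g m ≤ ε * ((k (r + 1) : ℝ) - k r) := by
  have hlen : (0 : ℝ) < (k (r + 1) : ℝ) - k r := sub_pos.2 (Nat.cast_lt.2 hr)
  rw [blockAverage, Nat.cast_sub hr.le, one_div, inv_mul_eq_div, div_le_iff₀ hlen]

theorem tendsto_blockAverage_comp {g : ℕ → ℝ} (hg : ∀ m, 0 ≤ g m) {k f : ℕ → ℕ}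
    (hk : StrictMono k) (hf : StrictMono f) (h : Tendsto (blockAverage k g) atTop (𝓝 0)) :
    Tendsto (blockAverage (k ∘ f) g) atTop (𝓝 0) := by
  refine tendsto_order.2 ⟨fun a ha => Eventually.of_forall fun r =>
    ha.trans_le (blockAverage_nonneg hg _ r), fun ε hε => ?_⟩
  obtain ⟨δ, hδ, hδε⟩ := exists_between hε
  obtain ⟨N, hN⟩ := eventually_atTop.1 ((tendsto_order.1 h).2 δ hδ)
  filter_upwards [hf.tendsto_atTop.eventually_ge_atTop N] with r hr
  refine lt_of_le_of_lt ?_ hδε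
  rw [blockAverage_le_iff (hk.comp hf r.lt_succ_self)]
  exact sum_Ioc_le_of_forall_block_le hk.monotone (hf.monotone r.le_succ) fun i hi =>
    (blockAverage_le_iff (hk i.lt_succ_self) g δ).1 (hN i (hr.trans (mem_Ico.1 hi).1)).le

theorem ACtheta_of_refinement_general (k k' : ℕ → ℕ)
    (hk : StrictMono k) (hk' : StrictMono k')
    (href : Set.range k ⊆ Set.range k')
    (n : ℕ) (x : ℕ → ℝ)
    (hx : ACtheta k' n x) :
    ACtheta k n x := by
  obtain ⟨f, hf, rfl⟩ := hk.exists_strictMono_comp_eq_of_range_subset hk' href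
  exact tendsto_blockAverage_comp (fun m => abs_nonneg _) hk' hf hx

/-- if `θ'` is a lacunary refinement of `θ` and `x ∈ AC_{θ'}`,
then `x ∈ AC_θ`. -/
theorem ACtheta_of_refinement (k k' : ℕ → ℕ)
    (hk : StrictMono k) (hk' : StrictMono k')
    (hh : Tendsto (fun r => (k (r + 1) - k r : ℕ)) atTop atTop)
    (hh' : Tendsto (fun r => (k' (r + 1) - k' r : ℕ)) atTop atTop)
    (href : Set.range k ⊆ Set.range k')
    (n : ℕ) (x : ℕ → ℝ)
    (hx : ACtheta k' n x) :
    ACtheta k n x :=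
  ACtheta_of_refinement_general k k' hk hk' href n x hx
end

section
/- Let θ = (k_r) be a lacunary sequence with liminf_r q_r > 1, where q_r = k_r / k_{r−1}. Then AC_{σ₁} ⊆ AC_θ: every sequence (x_m) for which there exists an integer n with (1/t) Σ_{m=1}^{t} |x_m − x_{⟨m,n⟩}| → 0 also satisfies (1/h_r) Σ_{m ∈ I_r} |x_m − x_{⟨m,n⟩}| → 0. -/
open Filter Finset

open Topology

/-!
If `q_r ≥ c > 1`, the block `(k_{r-1}, k_r]` has length `h_r ≥ (1 - 1/c) k_r`, so the block
average of a nonnegative sequence is at most `c / (c - 1)` times its Cesàro mean up to `k_r`,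
and the latter tends to `0`.
-/

lemma exists_one_lt_eventually_mul_le_of_one_lt_liminf {k : ℕ → ℕ}
    (hq : 1 < liminf (fun r => (k (r + 1) : ℝ) / k r) atTop) :
    ∃ c : ℝ, 1 < c ∧ ∀ᶠ r in atTop, c * k r ≤ k (r + 1) := by
  obtain ⟨c, hc1, hcq⟩ := exists_between hq
  have hratio : ∀ᶠ r in atTop, c < (k (r + 1) : ℝ) / k r :=
    eventually_lt_of_lt_liminf hcq
      (isBoundedUnder_of_eventually_ge (Eventually.of_forall fun _ => by positivity))
  refine ⟨c, hc1, hratio.mono fun r hr => ?_⟩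
  have hkr : (0 : ℝ) < k r :=
    Nat.cast_pos.mpr (Nat.pos_of_ne_zero fun h => by simp [h] at hr; linarith)
  exact ((lt_div_iff₀ hkr).mp hr).le

lemma block_average_le_mul_average {a : ℕ → ℝ} (ha : ∀ m, 0 ≤ a m) {c : ℝ} (hc : 1 < c)
    {j K : ℕ} (hjK : c * j ≤ K) :
    1 / ((K - j : ℕ) : ℝ) * ∑ m ∈ Ioc j K, a m ≤
      c / (c - 1) * (1 / (K : ℝ) * ∑ m ∈ Icc 1 K, a m) := by
  have hj : (0 : ℝ) ≤ j := Nat.cast_nonneg j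
  have hjK' : j ≤ K := by exact_mod_cast (show (j : ℝ) ≤ K by nlinarith)
  have hS : 0 ≤ ∑ m ∈ Icc 1 K, a m := sum_nonneg fun m _ => ha m
  have hTS : ∑ m ∈ Ioc j K, a m ≤ ∑ m ∈ Icc 1 K, a m :=
    sum_le_sum_of_subset_of_nonneg (Ioc_subset_Ioc_left (Nat.zero_le j)) fun m _ _ => ha m
  rcases (Nat.zero_le (K - j)).eq_or_lt with hh | hh
  · rw [← hh, Nat.cast_zero, div_zero, zero_mul]
    have : 0 < c - 1 := by linarith
    positivity
  have hK : (0 : ℝ) < K := by exact_mod_cast hh.trans_le (Nat.sub_le K j)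
  have hlen : (K : ℝ) ≤ c / (c - 1) * ((K - j : ℕ) : ℝ) := by
    rw [div_mul_eq_mul_div, le_div_iff₀ (by linarith)]
    push_cast [hjK']
    linarith
  rw [one_div_mul_eq_div, div_le_iff₀ (by exact_mod_cast hh)]
  calc ∑ m ∈ Ioc j K, a m ≤ ∑ m ∈ Icc 1 K, a m := hTS
    _ = 1 / (K : ℝ) * (∑ m ∈ Icc 1 K, a m) * K := by field_simp
    _ ≤ 1 / (K : ℝ) * (∑ m ∈ Icc 1 K, a m) * (c / (c - 1) * ((K - j : ℕ) : ℝ)) := by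
        gcongr
    _ = c / (c - 1) * (1 / (K : ℝ) * ∑ m ∈ Icc 1 K, a m) * ((K - j : ℕ) : ℝ) := by ring

lemma tendsto_block_average_of_tendsto_average {a : ℕ → ℝ} (ha : ∀ m, 0 ≤ a m)
    (hcesaro : Tendsto (fun t : ℕ => 1 / (t : ℝ) * ∑ m ∈ Icc 1 t, a m) atTop (𝓝 0))
    {k : ℕ → ℕ} (hk : Tendsto k atTop atTop) {c : ℝ} (hc : 1 < c)
    (hck : ∀ᶠ r in atTop, c * k r ≤ k (r + 1)) :
    Tendsto (fun r => 1 / ((k (r + 1) - k r : ℕ) : ℝ) * ∑ m ∈ Ioc (k r) (k (r + 1)), a m)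
      atTop (𝓝 0) := by
  have hbound : Tendsto (fun r => c / (c - 1) *
      (1 / (k (r + 1) : ℝ) * ∑ m ∈ Icc 1 (k (r + 1)), a m)) atTop (𝓝 0) := by
    simpa using (hcesaro.comp (hk.comp (tendsto_add_atTop_nat 1))).const_mul (c / (c - 1))
  refine squeeze_zero' (Eventually.of_forall fun r => ?_) ?_ hbound
  · exact mul_nonneg (by positivity) (sum_nonneg fun m _ => ha m)
  · exact hck.mono fun r hr => block_average_le_mul_average ha hc hr

theorem ACsigma_subset_ACtheta_general (k : ℕ → ℕ) (hk : StrictMono k)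
    (hq : 1 < Filter.liminf (fun r => ((k (r + 1) : ℝ) / (k r : ℝ))) atTop)
    (n : ℕ) (x : ℕ → ℝ) (hx : ACsigma n x) :
    ACtheta k n x := by
  obtain ⟨c, hc, hck⟩ := exists_one_lt_eventually_mul_le_of_one_lt_liminf hq
  exact tendsto_block_average_of_tendsto_average (fun _ => abs_nonneg _) hx hk.tendsto_atTop
    hc hck

/-- if `liminf q_r > 1` then `AC_{σ₁} ⊆ AC_θ`. -/
theorem ACsigma_subset_ACtheta (k : ℕ → ℕ) (hk : StrictMono k)
    (hkpos : ∀ r, 0 < k r)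
    (hh : Tendsto (fun r => (k (r + 1) - k r : ℕ)) atTop atTop)
    (hq : 1 < Filter.liminf (fun r => ((k (r + 1) : ℝ) / (k r : ℝ))) atTop)
    (n : ℕ) (x : ℕ → ℝ) (hx : ACsigma n x) :
    ACtheta k n x :=
  ACsigma_subset_ACtheta_general k hk hq n x hx
end

section
/- Let θ = (k_r) be a lacunary sequence with limsup_r q_r < ∞, where q_r = k_r / k_{r−1}. Then AC_θ ⊆ AC_{σ₁}: if there exists an integer n with (1/h_r) Σ_{m ∈ I_r} |x_m − x_{⟨m,n⟩}| → 0 as r → ∞, then (1/t) Σ_{m=1}^{t} |x_m − x_{⟨m,n⟩}| → 0 as t → ∞. -/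
/-!
Write `F t = ∑_{m ≤ t} |x m - x (gcd m n)|`. The hypothesis says that the increments
`F (k (r+1)) - F (k r)` are `o(k (r+1) - k r)`, so by Stolz–Cesàro `F (k r) = o(k r)`.
For `k r < t ≤ k (r+1)`, monotonicity of `F` gives `F t / t ≤ F (k (r+1)) / k r`, and the
bounded ratio `k (r+1) / k r` makes this `o(1)`.
-/

open Filter Finset

open Asymptotics

theorem isLittleO_of_isLittleO_succ_sub {a b : ℕ → ℝ} (hb : Monotone b)
    (hb_top : Tendsto b atTop atTop)
    (h : (fun r => a (r + 1) - a r) =o[atTop] fun r => b (r + 1) - b r) :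
    a =o[atTop] b := by
  have hconst (c : ℝ) : (fun _ => c) =o[atTop] b :=
    isLittleO_const_left.2 (Or.inr (tendsto_norm_atTop_atTop.comp hb_top))
  have hsum := h.sum_range (fun r => sub_nonneg.2 (hb r.le_succ)) <| by
    simpa only [sum_range_sub, ← sub_eq_add_neg] using
      tendsto_atTop_add_const_right _ (-b 0) hb_top
  simp only [sum_range_sub] at hsum
  have hb_sub : (fun r => b r - b 0) =O[atTop] b :=
    (isBigO_refl b _).sub (hconst (b 0)).isBigO
  simpa using (hsum.trans_isBigO hb_sub).add (hconst (a 0))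

theorem Monotone.isLittleO_natCast_of_comp {F : ℕ → ℝ} (hF : Monotone F)
    (hF0 : ∀ t, 0 ≤ F t) {k : ℕ → ℕ} (hk : StrictMono k)
    (hq : (fun r => (k (r + 1) : ℝ)) =O[atTop] fun r => (k r : ℝ))
    (h : (fun r => F (k r)) =o[atTop] fun r => (k r : ℝ)) :
    F =o[atTop] fun t => (t : ℝ) := by
  have hnext : (fun r => F (k (r + 1))) =o[atTop] fun r => (k r : ℝ) :=
    (h.comp_tendsto (tendsto_add_atTop_nat 1)).trans_isBigO hq
  refine IsLittleO.of_bound fun c hc => ?_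
  obtain ⟨R, hR⟩ := eventually_atTop.1 (hnext.bound hc)
  filter_upwards [eventually_gt_atTop (k R)] with t ht
  obtain ⟨r, hrt, htr⟩ :=
    hk.exists_between_of_tendsto_atTop hk.tendsto_atTop ((hk.monotone R.zero_le).trans_lt ht)
  have hRr : R ≤ r := by
    by_contra! hr
    exact (hk.monotone hr).not_gt (ht.trans_le htr)
  calc ‖F t‖ = F t := Real.norm_of_nonneg (hF0 t)
    _ ≤ F (k (r + 1)) := hF htr
    _ ≤ c * ‖(k r : ℝ)‖ := (le_abs_self _).trans (hR r hRr)
    _ ≤ c * ‖(t : ℝ)‖ := by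
      gcongr
      simpa using hrt.le

theorem sum_Ioc_eq_sum_Icc_one_sub {M : Type*} [AddCommGroup M] (y : ℕ → M) {a b : ℕ}
    (hab : a ≤ b) : ∑ m ∈ Ioc a b, y m = ∑ m ∈ Icc 1 b, y m - ∑ m ∈ Icc 1 a, y m := by
  rw [← Nat.zero_add 1, Icc_add_one_left_eq_Ioc, Icc_add_one_left_eq_Ioc,
    ← sum_Ioc_consecutive y a.zero_le hab, add_sub_cancel_left]

theorem ACtheta_subset_ACsigma_general (k : ℕ → ℕ) (hk : StrictMono k)
    (hq : IsBoundedUnder (· ≤ ·) atTop (fun r => ((k (r + 1) : ℝ) / (k r : ℝ))))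
    (n : ℕ) (x : ℕ → ℝ) (hx : ACtheta k n x) :
    ACsigma n x := by
  set F : ℕ → ℝ := fun t => ∑ m ∈ Icc 1 t, |x m - x (Nat.gcd m n)|
  have hF_mono : Monotone F := fun a b hab =>
    sum_le_sum_of_subset_of_nonneg (Icc_subset_Icc_right hab) fun _ _ _ => abs_nonneg _
  have hk_succ (r : ℕ) : (k r : ℝ) < k (r + 1) := by exact_mod_cast hk r.lt_succ_self
  have hFk : (fun r => F (k r)) =o[atTop] fun r => (k r : ℝ) := by
    refine isLittleO_of_isLittleO_succ_sub (fun a b hab => Nat.cast_le.2 (hk.monotone hab))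
      (tendsto_natCast_atTop_atTop.comp hk.tendsto_atTop) ?_
    rw [isLittleO_iff_tendsto fun r hr => absurd hr (sub_pos.2 (hk_succ r)).ne']
    refine hx.congr fun r => ?_
    rw [one_div_mul_eq_div, Nat.cast_sub (hk r.lt_succ_self).le,
      sum_Ioc_eq_sum_Icc_one_sub _ (hk r.lt_succ_self).le]
  have hk_ratio : (fun r => (k (r + 1) : ℝ)) =O[atTop] fun r => (k r : ℝ) := by
    rw [isBigO_iff_isBoundedUnder_le_div]
    · simpa only [Real.norm_natCast] using hq
    · filter_upwards [hk.tendsto_atTop.eventually_ne_atTop 0] with r hr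
      exact_mod_cast hr
  have hF_o := hF_mono.isLittleO_natCast_of_comp
    (fun t => sum_nonneg fun _ _ => abs_nonneg _) hk hk_ratio hFk
  rw [isLittleO_iff_tendsto fun t ht => by simp [F, Nat.cast_eq_zero.1 ht]] at hF_o
  simpa only [ACsigma, one_div_mul_eq_div] using hF_o

/-- if `limsup q_r < ∞` then `AC_θ ⊆ AC_{σ₁}`. -/
theorem ACtheta_subset_ACsigma (k : ℕ → ℕ) (hk : StrictMono k)
    (hkpos : ∀ r, 0 < k r)
    (hh : Tendsto (fun r => (k (r + 1) - k r : ℕ)) atTop atTop)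
    (hq : IsBoundedUnder (· ≤ ·) atTop (fun r => ((k (r + 1) : ℝ) / (k r : ℝ))))
    (n : ℕ) (x : ℕ → ℝ) (hx : ACtheta k n x) :
    ACsigma n x :=
  ACtheta_subset_ACsigma_general k hk hq n x hx
end

section
/- For every modulus function f and lacunary sequence θ, AC_θ ⊆ AC_θ(f): if there exists an integer n such that (1/h_r) Σ_{m∈I_r} |x_m − x_{⟨m,n⟩}| → 0 as r → ∞, then (1/h_r) Σ_{m∈I_r} f(|x_m − x_{⟨m,n⟩}|) → 0 as r → ∞. -/
/-!
By subadditivity and monotonicity a modulus grows at most linearly away from `0`: for every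
`δ > 0`, `f x ≤ f δ + (f δ / δ) x`. Since `f δ → 0` as `δ → 0+`, for every `ε > 0` there is `C`
with `f x ≤ ε + C x` on `[0, ∞)`. Averaging over a block gives
`(1/h_r) Σ f |…| ≤ ε + C (1/h_r) Σ |…|`, whose right-hand side is eventually below `2ε`.
-/

open Filter Finset

/-- A modulus function `f : [0,∞) → [0,∞)`. -/
structure IsModulus (f : ℝ → ℝ) : Prop where
  nonneg : ∀ x, 0 ≤ x → 0 ≤ f x
  eq_zero_iff : ∀ x, 0 ≤ x → (f x = 0 ↔ x = 0)
  subadd : ∀ x y, 0 ≤ x → 0 ≤ y → f (x + y) ≤ f x + f y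
  mono : ∀ x y, 0 ≤ x → x ≤ y → f x ≤ f y
  right_cont : ContinuousWithinAt f (Set.Ici 0) 0

/-- Membership in `AC_θ(f)` with witness integer `n`. -/
def ACthetaF (f : ℝ → ℝ) (k : ℕ → ℕ) (n : ℕ) (x : ℕ → ℝ) : Prop :=
  Filter.Tendsto (fun r => (1 / ((k (r + 1) - k r : ℕ) : ℝ)) *
    ∑ m ∈ Finset.Ioc (k r) (k (r + 1)), f |x m - x (Nat.gcd m n)|)
    Filter.atTop (nhds 0)

namespace IsModulus

variable {f : ℝ → ℝ}

theorem le_natCast_mul (hf : IsModulus f) {y : ℝ} (hy : 0 ≤ y) (N : ℕ) :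
    f (N * y) ≤ N * f y := by
  induction N with
  | zero => simp [(hf.eq_zero_iff 0 le_rfl).mpr rfl]
  | succ N ih =>
    calc f ((N + 1 : ℕ) * y) = f (N * y + y) := by push_cast; ring_nf
      _ ≤ f (N * y) + f y := hf.subadd _ _ (by positivity) hy
      _ ≤ N * f y + f y := by gcongr
      _ = (N + 1 : ℕ) * f y := by push_cast; ring

/-- Cover `[0, x]` by `⌈x / δ⌉` intervals of length `δ`. -/
theorem le_add_div_mul (hf : IsModulus f) {δ x : ℝ} (hδ : 0 < δ) (hx : 0 ≤ x) :
    f x ≤ f δ + f δ / δ * x := by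
  have hceil : x ≤ ⌈x / δ⌉₊ * δ := (div_le_iff₀ hδ).mp (Nat.le_ceil _)
  calc f x ≤ f (⌈x / δ⌉₊ * δ) := hf.mono _ _ hx hceil
    _ ≤ ⌈x / δ⌉₊ * f δ := hf.le_natCast_mul hδ.le _
    _ ≤ (x / δ + 1) * f δ :=
        mul_le_mul_of_nonneg_right (Nat.ceil_lt_add_one (by positivity)).le (hf.nonneg _ hδ.le)
    _ = f δ + f δ / δ * x := by ring

theorem exists_le_add_mul (hf : IsModulus f) {ε : ℝ} (hε : 0 < ε) :
    ∃ C, ∀ x, 0 ≤ x → f x ≤ ε + C * x := by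
  have hlim : Tendsto f (nhdsWithin 0 (Set.Ioi 0)) (nhds 0) := by
    have := hf.right_cont.mono_left (nhdsWithin_mono _ Set.Ioi_subset_Ici_self)
    rwa [(hf.eq_zero_iff 0 le_rfl).mpr rfl] at this
  obtain ⟨δ, hfδ, hδ⟩ :=
    ((hlim.eventually (gt_mem_nhds hε)).and self_mem_nhdsWithin).exists
  exact ⟨f δ / δ, fun x hx => (hf.le_add_div_mul hδ hx).trans (by gcongr)⟩

end IsModulus

theorem one_div_card_mul_sum_le_add_mul {ι : Type*} {s : Finset ι} {g a : ι → ℝ} {ε C : ℝ}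
    (hε : 0 ≤ ε) (h : ∀ i ∈ s, g i ≤ ε + C * a i) :
    1 / (#s : ℝ) * ∑ i ∈ s, g i ≤ ε + C * (1 / (#s : ℝ) * ∑ i ∈ s, a i) := by
  rcases s.eq_empty_or_nonempty with rfl | hs
  · simpa using hε
  calc 1 / (#s : ℝ) * ∑ i ∈ s, g i ≤ 1 / (#s : ℝ) * ∑ i ∈ s, (ε + C * a i) := by
        gcongr with i hi
        exact h i hi
    _ = ε + C * (1 / (#s : ℝ) * ∑ i ∈ s, a i) := by
        have : (#s : ℝ) ≠ 0 := by exact_mod_cast hs.card_pos.ne'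
        rw [sum_add_distrib, sum_const, nsmul_eq_mul, ← mul_sum]
        field_simp

theorem tendsto_zero_of_forall_le_add_mul {ι : Type*} {l : Filter ι} {u v : ι → ℝ}
    (hu : ∀ i, 0 ≤ u i) (hv : Tendsto v l (nhds 0))
    (h : ∀ ε > 0, ∃ C, ∀ i, u i ≤ ε + C * v i) : Tendsto u l (nhds 0) := by
  refine tendsto_order.2 ⟨fun a ha => Eventually.of_forall fun i => ha.trans_le (hu i),
    fun a ha => ?_⟩
  obtain ⟨C, hC⟩ := h (a / 2) (half_pos ha)
  have hlim : Tendsto (fun i => a / 2 + C * v i) l (nhds (a / 2 + C * 0)) :=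
    tendsto_const_nhds.add (hv.const_mul C)
  exact (hlim.eventually (gt_mem_nhds (by linarith))).mono fun i hi => (hC i).trans_lt hi

theorem ACtheta_subset_ACthetaF_general (f : ℝ → ℝ) (hf : IsModulus f)
    (k : ℕ → ℕ)
    (n : ℕ) (x : ℕ → ℝ) (hx : ACtheta k n x) :
    ACthetaF f k n x := by
  refine tendsto_zero_of_forall_le_add_mul (fun r => ?_) hx fun ε hε => ?_
  · exact mul_nonneg (by positivity) (sum_nonneg fun m _ => hf.nonneg _ (abs_nonneg _))
  obtain ⟨C, hC⟩ := hf.exists_le_add_mul hε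
  refine ⟨C, fun r => ?_⟩
  rw [← Nat.card_Ioc]
  exact one_div_card_mul_sum_le_add_mul hε.le fun m _ => hC _ (abs_nonneg _)

/-- `AC_θ ⊆ AC_θ(f)` for any modulus `f`. -/
theorem ACtheta_subset_ACthetaF (f : ℝ → ℝ) (hf : IsModulus f)
    (k : ℕ → ℕ) (hk : StrictMono k)
    (hh : Tendsto (fun r => (k (r + 1) - k r : ℕ)) atTop atTop)
    (n : ℕ) (x : ℕ → ℝ) (hx : ACtheta k n x) :
    ACthetaF f k n x :=
  ACtheta_subset_ACthetaF_general f hf k n x hx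
end

section
/- Let f be a modulus function with lim_{t→∞} f(t)/t = β > 0. Then AC_θ(f) ⊆ AC_θ: if there exists an integer n such that (1/h_r) Σ_{m∈I_r} f(|x_m − x_{⟨m,n⟩}|) → 0, then (1/h_r) Σ_{m∈I_r} |x_m − x_{⟨m,n⟩}| → 0. (Key step: β > 0 together with subadditivity and monotonicity of f implies f(t) ≥ β t for all t ≥ 0.) -/
open Filter Finset

open Topology

namespace IsModulus

variable {f : ℝ → ℝ}

theorem subadditive_comp_mul (hf : IsModulus f) {t : ℝ} (ht : 0 ≤ t) :
    Subadditive fun N : ℕ => f (N * t) := fun m n => by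
  simpa only [Nat.cast_add, add_mul] using hf.subadd _ _ (by positivity) (by positivity)

/-- By Fekete's lemma `f (N t) / N` tends to its infimum, which is at most `f t`, while
`f (N t) / N = t · f (N t) / (N t) → β t`. -/
theorem mul_le_of_tendsto_div (hf : IsModulus f) {β : ℝ}
    (hlim : Tendsto (fun t => f t / t) atTop (𝓝 β)) {t : ℝ} (ht : 0 ≤ t) : β * t ≤ f t := by
  rcases ht.eq_or_lt with rfl | ht
  · simpa using hf.nonneg 0 le_rfl
  have hsub := hf.subadditive_comp_mul ht.le
  have hbdd : BddBelow (Set.range fun N : ℕ => f (N * t) / N) :=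
    ⟨0, by rintro _ ⟨N, rfl⟩; exact div_nonneg (hf.nonneg _ (by positivity)) N.cast_nonneg⟩
  have hβt : Tendsto (fun N : ℕ => f (N * t) / N) atTop (𝓝 (β * t)) := by
    have hmul : Tendsto (fun N : ℕ => (N : ℝ) * t) atTop atTop :=
      tendsto_natCast_atTop_atTop.atTop_mul_const ht
    refine ((hlim.comp hmul).mul_const t).congr' ?_
    filter_upwards [eventually_ne_atTop 0] with N hN
    simp only [Function.comp_apply]
    field_simp
  calc β * t = hsub.lim := tendsto_nhds_unique hβt (hsub.tendsto_lim hbdd)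
    _ ≤ f ((1 : ℕ) * t) / (1 : ℕ) := hsub.lim_le_div hbdd one_ne_zero
    _ = f t := by simp

end IsModulus

theorem ACthetaF_subset_ACtheta_general (f : ℝ → ℝ) (hf : IsModulus f)
    (β : ℝ) (hβ : 0 < β)
    (hlim : Tendsto (fun t : ℝ => f t / t) atTop (nhds β))
    (k : ℕ → ℕ)
    (n : ℕ) (x : ℕ → ℝ) (hx : ACthetaF f k n x) :
    ACtheta k n x := by
  have hbound : ∀ t, 0 ≤ t → t ≤ β⁻¹ * f t := fun t ht => by
    rw [le_inv_mul_iff₀ hβ]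
    exact hf.mul_le_of_tendsto_div hlim ht
  have hupper := hx.const_mul β⁻¹
  rw [mul_zero] at hupper
  refine squeeze_zero (fun r => by positivity) (fun r => ?_) hupper
  rw [mul_left_comm]
  gcongr
  rw [mul_sum]
  gcongr with m
  exact hbound _ (abs_nonneg _)

/-- if `lim f(t)/t = β > 0` then `AC_θ(f) ⊆ AC_θ`. -/
theorem ACthetaF_subset_ACtheta (f : ℝ → ℝ) (hf : IsModulus f)
    (β : ℝ) (hβ : 0 < β)
    (hlim : Tendsto (fun t : ℝ => f t / t) atTop (nhds β))
    (k : ℕ → ℕ) (hk : StrictMono k)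
    (hh : Tendsto (fun r => (k (r + 1) - k r : ℕ)) atTop atTop)
    (n : ℕ) (x : ℕ → ℝ) (hx : ACthetaF f k n x) :
    ACtheta k n x :=
  ACthetaF_subset_ACtheta_general f hf β hβ hlim k n x hx
end

section
/- For any modulus function f, the space X(f) = { (x_k) : Σ_{k=1}^∞ f(|x_k|) < ∞ } is contained in ℓ¹, i.e., every sequence with Σ f(|x_k|) < ∞ is absolutely summable. -/
/-!
For `0 < t ≤ s`, subadditivity and monotonicity give
`f s ≤ f (⌈s/t⌉ t) ≤ ⌈s/t⌉ f t ≤ (2s/t) f t`, so on `[0, 1]` the identity is dominated by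
`(2 / f 1) • f`. Summability of `f |x k|` forces `f |x k| → 0`, hence `|x k| < 1` for all but
finitely many `k`, and the comparison test applies.
-/

open Filter

namespace IsModulus

variable {f : ℝ → ℝ}

theorem map_zero (hf : IsModulus f) : f 0 = 0 :=
  (hf.eq_zero_iff 0 le_rfl).mpr rfl

theorem pos (hf : IsModulus f) {t : ℝ} (ht : 0 < t) : 0 < f t :=
  (hf.nonneg t ht.le).lt_of_ne fun h => ht.ne' ((hf.eq_zero_iff t ht.le).mp h.symm)

theorem map_nat_mul_le (hf : IsModulus f) {t : ℝ} (ht : 0 ≤ t) (n : ℕ) :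
    f (n * t) ≤ n * f t := by
  induction n with
  | zero => simp [hf.map_zero]
  | succ n ih =>
    calc f ((n + 1 : ℕ) * t) = f (n * t + t) := by push_cast; ring_nf
      _ ≤ f (n * t) + f t := hf.subadd _ _ (by positivity) ht
      _ ≤ (n + 1 : ℕ) * f t := by push_cast; linarith

theorem mul_le_two_mul (hf : IsModulus f) {s t : ℝ} (ht : 0 ≤ t) (hts : t ≤ s) :
    t * f s ≤ 2 * s * f t := by
  rcases ht.eq_or_lt with rfl | ht
  · simp [hf.map_zero]
  set n := ⌈s / t⌉₊
  have hs_le : s ≤ n * t := (div_le_iff₀ ht).mp (Nat.le_ceil _)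
  have hn_le : n * t ≤ 2 * s := by
    have : (n : ℝ) < s / t + 1 := Nat.ceil_lt_add_one (div_pos (ht.trans_le hts) ht).le
    have : (n : ℝ) * t < s + t := by rwa [← lt_div_iff₀ ht, add_div, div_self ht.ne']
    linarith
  calc t * f s ≤ t * (n * f t) := by
        gcongr
        exact (hf.mono _ _ (ht.le.trans hts) hs_le).trans (hf.map_nat_mul_le ht.le n)
    _ = n * t * f t := by ring
    _ ≤ 2 * s * f t := by gcongr; exact hf.nonneg t ht.le

theorem lt_one_of_lt_map_one (hf : IsModulus f) {t : ℝ} (hft : f t < f 1) : t < 1 :=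
  lt_of_not_ge fun h => hft.not_ge (hf.mono 1 t zero_le_one h)

theorem summable_abs_of_summable (hf : IsModulus f) {ι : Type*} {x : ι → ℝ}
    (hx : Summable fun k => f |x k|) :
    Summable fun k => |x k| := by
  have hf1 : 0 < f 1 := hf.pos one_pos
  have hsmall : ∀ᶠ k in cofinite, |x k| < 1 :=
    (hx.tendsto_cofinite_zero.eventually (gt_mem_nhds hf1)).mono fun k hk =>
      hf.lt_one_of_lt_map_one hk
  refine (hx.mul_left (2 / f 1)).of_norm_bounded_eventually (hsmall.mono fun k hk => ?_)
  rw [Real.norm_eq_abs, abs_abs, div_mul_eq_mul_div, le_div_iff₀ hf1]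
  simpa using hf.mul_le_two_mul (abs_nonneg (x k)) hk.le

end IsModulus

/-- `X(f) ⊆ ℓ¹` for any modulus `f`. -/
theorem Xf_subset_l1 (f : ℝ → ℝ) (hf : IsModulus f) (x : ℕ → ℝ)
    (hx : Summable (fun k => f |x k|)) :
    Summable (fun k => |x k|) :=
  hf.summable_abs_of_summable hx
end
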